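/- Composition of winning MSO-EF strategies on disjoint unions: let τ be a finite relational signature with unary and binary symbols. If the duplicator has winning strategies in the m-round MSO Ehrenfeucht–Fraïssé game (allowing both point moves and set moves) between A₁ and A₂ and between B₁ and B₂, then the duplicator has a winning strategy in the m-round MSO-EF game between A₁ ⊔ B₁ and A₂ ⊔ B₂, obtained by splitting each set move Z into Z ∩ A-part and Z ∩ B-part and answering componentwise; in particular A₁ ⊔ B₁ and A₂ ⊔ B₂ satisfy the same MSO sentences of quantifier rank ≤ m. -/

import Mathlib

open FirstOrder Language

/-- MSO formulas over a relational signature `L`, with `n` free first-order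
variables and `k` free set variables. -/
inductive MSOForm (L : FirstOrder.Language) : ℕ → ℕ → Type _
  | fal {n k : ℕ} : MSOForm L n k
  | eq {n k : ℕ} (i j : Fin n) : MSOForm L n k
  | rel {n k r : ℕ} (R : L.Relations r) (v : Fin r → Fin n) : MSOForm L n k
  | mem {n k : ℕ} (i : Fin n) (X : Fin k) : MSOForm L n k
  | imp {n k : ℕ} (f g : MSOForm L n k) : MSOForm L n k
  | allP {n k : ℕ} (f : MSOForm L (n + 1) k) : MSOForm L n k
  | allS {n k : ℕ} (f : MSOForm L n (k + 1)) : MSOForm L n k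

/-- Satisfaction of MSO formulas. -/
def MSORealize {L : FirstOrder.Language} {M : Type} (SM : L.Structure M) :
    ∀ {n k : ℕ}, MSOForm L n k → (Fin n → M) → (Fin k → Set M) → Prop
  | _, _, .fal, _, _ => False
  | _, _, .eq i j, p, _ => p i = p j
  | _, _, .rel R v, p, _ => SM.RelMap R (p ∘ v)
  | _, _, .mem i X, p, s => p i ∈ s X
  | _, _, .imp f g, p, s => MSORealize SM f p s → MSORealize SM g p s
  | _, _, .allP f, p, s => ∀ x : M, MSORealize SM f (Fin.snoc p x) s
  | _, _, .allS f, p, s => ∀ X : Set M, MSORealize SM f p (Fin.snoc s X)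

/-- Quantifier rank of an MSO formula (counting both kinds of quantifiers). -/
def msoQR {L : FirstOrder.Language} : ∀ {n k : ℕ}, MSOForm L n k → ℕ
  | _, _, .fal => 0
  | _, _, .eq _ _ => 0
  | _, _, .rel _ _ => 0
  | _, _, .mem _ _ => 0
  | _, _, .imp f g => max (msoQR f) (msoQR g)
  | _, _, .allP f => msoQR f + 1
  | _, _, .allS f => msoQR f + 1

/-- A move in the MSO-EF game on `M`: a point move or a set move. -/
def MSOMove (M : Type) : Type := M ⊕ Set M

/-- A duplicator strategy in the MSO-EF game between `M` and `N`. -/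
def MSOStrat (M N : Type) : Type :=
  List (MSOMove M × MSOMove N) → (MSOMove M ⊕ MSOMove N) → MSOMove M × MSOMove N

/-- A strategy is proper if it keeps the spoiler's move on its own side. -/
def msoProper {M N : Type} (S : MSOStrat M N) : Prop :=
  ∀ h x, (∀ a, x = Sum.inl a → (S h x).1 = a) ∧ (∀ b, x = Sum.inr b → (S h x).2 = b)

/-- The history after `k` rounds of the duplicator strategy `S` against the
adaptive spoiler `σ`. -/
def msoPlay {M N : Type} (S : MSOStrat M N)
    (σ : List (MSOMove M × MSOMove N) → MSOMove M ⊕ MSOMove N) :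
    ℕ → List (MSOMove M × MSOMove N)
  | 0 => []
  | k + 1 => msoPlay S σ k ++ [S (msoPlay S σ k) (σ (msoPlay S σ k))]

/-- The point pairs of a history. -/
def ptsOf {M N : Type} (h : List (MSOMove M × MSOMove N)) : List (M × N) :=
  h.filterMap fun p =>
    match p with
    | (Sum.inl a, Sum.inl b) => some (a, b)
    | _ => none

/-- The set pairs of a history. -/
def setsOf {M N : Type} (h : List (MSOMove M × MSOMove N)) : List (Set M × Set N) :=
  h.filterMap fun p =>
    match p with
    | (Sum.inr X, Sum.inr Y) => some (X, Y)
    | _ => none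

/-- The duplicator wins on a history if point moves were answered by points,
set moves by sets, and the chosen points form a partial isomorphism between
the structures expanded by the chosen sets as unary predicates. -/
def msoWinOn (L : FirstOrder.Language) {M N : Type}
    (SM : L.Structure M) (SN : L.Structure N)
    (h : List (MSOMove M × MSOMove N)) : Prop :=
  (∀ p ∈ h, (∃ a b, p = (Sum.inl a, Sum.inl b)) ∨ (∃ X Y, p = (Sum.inr X, Sum.inr Y))) ∧
  (∀ p ∈ ptsOf h, ∀ q ∈ ptsOf h, (p.1 = q.1 ↔ p.2 = q.2)) ∧
  (∀ (n : ℕ) (R : L.Relations n) (f : Fin n → M × N), (∀ i, f i ∈ ptsOf h) →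
    (SM.RelMap R (fun i => (f i).1) ↔ SN.RelMap R (fun i => (f i).2))) ∧
  (∀ p ∈ ptsOf h, ∀ s ∈ setsOf h, (p.1 ∈ s.1 ↔ p.2 ∈ s.2))

/-- A winning strategy for the `m`-round MSO-EF game. -/
def msoWinning (L : FirstOrder.Language) {M N : Type}
    (SM : L.Structure M) (SN : L.Structure N) (m : ℕ) (S : MSOStrat M N) : Prop :=
  ∀ σ, msoWinOn L SM SN (msoPlay S σ m)

/-- The disjoint union of two structures over a relational signature. -/
def sumStructure (L : FirstOrder.Language) (hfun : ∀ n, IsEmpty (L.Functions n))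
    {M N : Type} (SM : L.Structure M) (SN : L.Structure N) :
    L.Structure (M ⊕ N) where
  funMap := fun {n} f => ((hfun n).false f).elim
  RelMap := fun {n} R x =>
    (∃ f : Fin n → M, x = Sum.inl ∘ f ∧ SM.RelMap R f) ∨
    (∃ g : Fin n → N, x = Sum.inr ∘ g ∧ SN.RelMap R g)

/-- The set underlying a move (a point move gives a singleton; only used on
set moves). -/
def moveSet {X : Type} : MSOMove X → Set X
  | Sum.inl a => {a}
  | Sum.inr s => s

/-- Transport of a move along an injection. -/
def mapMove {X Y : Type} (f : X → Y) : MSOMove X → MSOMove Y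
  | Sum.inl a => Sum.inl (f a)
  | Sum.inr s => Sum.inr (f '' s)

/-- The `A`-part of a history of the MSO-EF game on the disjoint unions:
point pairs in the `A`-parts are kept, set pairs are intersected with the
`A`-parts. -/
def msoProjA {A₁ B₁ A₂ B₂ : Type}
    (h : List (MSOMove (A₁ ⊕ B₁) × MSOMove (A₂ ⊕ B₂))) :
    List (MSOMove A₁ × MSOMove A₂) :=
  h.filterMap fun p =>
    match p with
    | (Sum.inl (Sum.inl a), Sum.inl (Sum.inl a')) => some (Sum.inl a, Sum.inl a')
    | (Sum.inr Z, Sum.inr Z') => some (Sum.inr (Sum.inl ⁻¹' Z), Sum.inr (Sum.inl ⁻¹' Z'))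
    | _ => none

/-- The `B`-part of a history of the MSO-EF game on the disjoint unions. -/
def msoProjB {A₁ B₁ A₂ B₂ : Type}
    (h : List (MSOMove (A₁ ⊕ B₁) × MSOMove (A₂ ⊕ B₂))) :
    List (MSOMove B₁ × MSOMove B₂) :=
  h.filterMap fun p =>
    match p with
    | (Sum.inl (Sum.inr b), Sum.inl (Sum.inr b')) => some (Sum.inl b, Sum.inl b')
    | (Sum.inr Z, Sum.inr Z') => some (Sum.inr (Sum.inr ⁻¹' Z), Sum.inr (Sum.inr ⁻¹' Z'))
    | _ => none

/-- The composed strategy on the disjoint unions: answer point moves in the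
`A`-part by `S₁` and in the `B`-part by `S₂`; split each set move `Z` into its
`A`-part and `B`-part, answer componentwise by `S₁` and `S₂`, and return the
union of the two answers. -/
def msoComp {A₁ B₁ A₂ B₂ : Type} (S₁ : MSOStrat A₁ A₂) (S₂ : MSOStrat B₁ B₂) :
    MSOStrat (A₁ ⊕ B₁) (A₂ ⊕ B₂) :=
  fun h pick =>
    match pick with
    | Sum.inl (Sum.inl (Sum.inl a)) =>
        let r := S₁ (msoProjA h) (Sum.inl (Sum.inl a))
        (Sum.inl (Sum.inl a), mapMove Sum.inl r.2)
    | Sum.inl (Sum.inl (Sum.inr b)) =>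
        let r := S₂ (msoProjB h) (Sum.inl (Sum.inl b))
        (Sum.inl (Sum.inr b), mapMove Sum.inr r.2)
    | Sum.inl (Sum.inr Z) =>
        let rA := S₁ (msoProjA h) (Sum.inl (Sum.inr (Sum.inl ⁻¹' Z)))
        let rB := S₂ (msoProjB h) (Sum.inl (Sum.inr (Sum.inr ⁻¹' Z)))
        (Sum.inr Z, Sum.inr (Sum.inl '' moveSet rA.2 ∪ Sum.inr '' moveSet rB.2))
    | Sum.inr (Sum.inl (Sum.inl a')) =>
        let r := S₁ (msoProjA h) (Sum.inr (Sum.inl a'))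
        (mapMove Sum.inl r.1, Sum.inl (Sum.inl a'))
    | Sum.inr (Sum.inl (Sum.inr b')) =>
        let r := S₂ (msoProjB h) (Sum.inr (Sum.inl b'))
        (mapMove Sum.inr r.1, Sum.inl (Sum.inr b'))
    | Sum.inr (Sum.inr Z') =>
        let rA := S₁ (msoProjA h) (Sum.inr (Sum.inr (Sum.inl ⁻¹' Z')))
        let rB := S₂ (msoProjB h) (Sum.inr (Sum.inr (Sum.inr ⁻¹' Z')))
        (Sum.inr (Sum.inl '' moveSet rA.1 ∪ Sum.inr '' moveSet rB.1), Sum.inr Z')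

/-!
Along every play of `msoComp S₁ S₂`, the `A`-part and the `B`-part of the history are histories
of plays of `S₁` and `S₂` of no greater length: a point move lives in one component and is
answered there, and a set move is answered slice by slice. As `S₁` and `S₂` win, both parts are
partial isomorphisms respecting the chosen sets, and since the disjoint union has no relations
across the components, their union is one as well. The claim about sentences is the easy half
of the Ehrenfeucht–Fraïssé theorem: by induction on formulas, a history reached by a winning
strategy with `r` rounds to spare is not distinguished by formulas of quantifier rank `r`.
-/

open Relator

namespace Sum.LiftRel

variable {α β γ δ : Type*} {r : α → γ → Prop} {s : β → δ → Prop}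

lemma eq_iff_eq (hr : (r ⇒ r ⇒ Iff) Eq Eq) (hs : (s ⇒ s ⇒ Iff) Eq Eq) {x x' : α ⊕ β}
    {y y' : γ ⊕ δ} (h : LiftRel r s x y) (h' : LiftRel r s x' y') : x = x' ↔ y = y' := by
  cases h with
  | inl hac => cases h' with
    | inl hac' => simpa using hr hac hac'
    | inr => simp
  | inr hbd => cases h' with
    | inl => simp
    | inr hbd' => simpa using hs hbd hbd'

variable {ι : Type*} {x : ι → α ⊕ β} {y : ι → γ ⊕ δ}

lemma exists_comp_inl_iff (hxy : ∀ i, LiftRel r s (x i) (y i)) {P : (ι → α) → Prop}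
    {Q : (ι → γ) → Prop} (hPQ : ∀ f g, (∀ i, r (f i) (g i)) → (P f ↔ Q g)) :
    (∃ f, x = inl ∘ f ∧ P f) ↔ ∃ g, y = inl ∘ g ∧ Q g := by
  constructor
  · rintro ⟨f, rfl, hf⟩
    have : ∀ i, ∃ c, r (f i) c ∧ y i = inl c := fun i => by
      obtain ⟨a, c, hac, ha, hc⟩ := (hxy i).exists_of_isLeft_left rfl
      cases ha
      exact ⟨c, hac, hc⟩
    choose g hfg hg using this
    exact ⟨g, funext hg, (hPQ f g hfg).1 hf⟩
  · rintro ⟨g, rfl, hg⟩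
    have : ∀ i, ∃ a, r a (g i) ∧ x i = inl a := fun i => by
      obtain ⟨a, c, hac, ha, hc⟩ := (hxy i).exists_of_isLeft_right rfl
      cases hc
      exact ⟨a, hac, ha⟩
    choose f hfg hf using this
    exact ⟨f, funext hf, (hPQ f g hfg).2 hg⟩

lemma exists_comp_inr_iff (hxy : ∀ i, LiftRel r s (x i) (y i)) {P : (ι → β) → Prop}
    {Q : (ι → δ) → Prop} (hPQ : ∀ f g, (∀ i, s (f i) (g i)) → (P f ↔ Q g)) :
    (∃ f, x = inr ∘ f ∧ P f) ↔ ∃ g, y = inr ∘ g ∧ Q g := by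
  constructor
  · rintro ⟨f, rfl, hf⟩
    have : ∀ i, ∃ d, s (f i) d ∧ y i = inr d := fun i => by
      obtain ⟨b, d, hbd, hb, hd⟩ := (hxy i).exists_of_isRight_left rfl
      cases hb
      exact ⟨d, hbd, hd⟩
    choose g hfg hg using this
    exact ⟨g, funext hg, (hPQ f g hfg).1 hf⟩
  · rintro ⟨g, rfl, hg⟩
    have : ∀ i, ∃ b, s b (g i) ∧ x i = inr b := fun i => by
      obtain ⟨b, d, hbd, hb, hd⟩ := (hxy i).exists_of_isRight_right rfl
      cases hd
      exact ⟨b, hbd, hb⟩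
    choose f hfg hf using this
    exact ⟨f, funext hf, (hPQ f g hfg).2 hg⟩

end Sum.LiftRel

lemma sumStructure_relMap_iff_of_liftRel {L : FirstOrder.Language}
    (hfun : ∀ n, IsEmpty (L.Functions n)) {A₁ A₂ B₁ B₂ : Type}
    {SA₁ : L.Structure A₁} {SA₂ : L.Structure A₂} {SB₁ : L.Structure B₁}
    {SB₂ : L.Structure B₂} {r : A₁ → A₂ → Prop} {s : B₁ → B₂ → Prop}
    (hr : ∀ {n} (R : L.Relations n) f g, (∀ i, r (f i) (g i)) → (SA₁.RelMap R f ↔ SA₂.RelMap R g))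
    (hs : ∀ {n} (R : L.Relations n) f g, (∀ i, s (f i) (g i)) → (SB₁.RelMap R f ↔ SB₂.RelMap R g))
    {n : ℕ} (R : L.Relations n) {x : Fin n → A₁ ⊕ B₁} {y : Fin n → A₂ ⊕ B₂}
    (hxy : ∀ i, Sum.LiftRel r s (x i) (y i)) :
    (sumStructure L hfun SA₁ SB₁).RelMap R x ↔ (sumStructure L hfun SA₂ SB₂).RelMap R y :=
  or_congr (Sum.LiftRel.exists_comp_inl_iff hxy (hr R)) (Sum.LiftRel.exists_comp_inr_iff hxy (hs R))

lemma forall_mem_snoc {α : Type*} {l : List α} {n : ℕ} {v : Fin n → α} {a : α}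
    (hv : ∀ i, v i ∈ l) (ha : a ∈ l) : ∀ i, (Fin.snoc v a : Fin (n + 1) → α) i ∈ l :=
  Fin.lastCases (by simpa using ha) fun i => by simpa using hv i


section Game

variable {L : FirstOrder.Language} {M N : Type}

lemma msoPlay_length (S : MSOStrat M N) (σ) (k : ℕ) : (msoPlay S σ k).length = k := by
  induction k with
  | zero => rfl
  | succ k ih => simp [msoPlay, ih]

lemma msoPlay_prefix (S : MSOStrat M N) (σ) {i j : ℕ} (hij : i ≤ j) :
    msoPlay S σ i <+: msoPlay S σ j := by
  induction j, hij using Nat.le_induction with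
  | base => exact List.prefix_refl _
  | succ j _ ih => exact ih.trans (List.prefix_append _ _)

lemma msoPlay_congr (S : MSOStrat M N) {σ σ'} {j : ℕ}
    (hσ : ∀ i < j, σ' (msoPlay S σ i) = σ (msoPlay S σ i)) :
    msoPlay S σ' j = msoPlay S σ j := by
  induction j with
  | zero => rfl
  | succ j ih =>
    have hj : msoPlay S σ' j = msoPlay S σ j := ih fun i hi => hσ i (by omega)
    simp [msoPlay, hj, hσ j j.lt_succ_self]

def Reachable (S : MSOStrat M N) (h : List (MSOMove M × MSOMove N)) : Prop :=
  ∃ σ, msoPlay S σ h.length = h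

lemma Reachable.nil (S : MSOStrat M N) : Reachable S [] :=
  ⟨fun _ => Sum.inl (Sum.inr ∅), rfl⟩

lemma Reachable.append {S : MSOStrat M N} {h} (hr : Reachable S h) (z : MSOMove M ⊕ MSOMove N) :
    Reachable S (h ++ [S h z]) := by
  obtain ⟨σ, hσ⟩ := hr
  -- the spoiler who plays like `σ` up to round `h.length` and then plays `z`
  let σ' : List (MSOMove M × MSOMove N) → MSOMove M ⊕ MSOMove N :=
    fun h' => if h'.length = h.length then z else σ h'
  have hplay : msoPlay S σ' h.length = h :=
    (msoPlay_congr S fun i hi => by simp [σ', msoPlay_length, hi.ne]).trans hσ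
  refine ⟨σ', ?_⟩
  rw [List.length_append, List.length_singleton]
  simp only [msoPlay, hplay, σ', if_pos]

lemma mem_ptsOf {h : List (MSOMove M × MSOMove N)} {x : M} {y : N} :
    (x, y) ∈ ptsOf h ↔ (Sum.inl x, Sum.inl y) ∈ h := by
  simp only [ptsOf, List.mem_filterMap]
  constructor
  · rintro ⟨⟨a | X, b | Y⟩, hp, he⟩ <;> cases he
    exact hp
  · exact fun hp => ⟨_, hp, rfl⟩

lemma mem_setsOf {h : List (MSOMove M × MSOMove N)} {X : Set M} {Y : Set N} :
    (X, Y) ∈ setsOf h ↔ (Sum.inr X, Sum.inr Y) ∈ h := by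
  simp only [setsOf, List.mem_filterMap]
  constructor
  · rintro ⟨⟨a | X, b | Y⟩, hp, he⟩ <;> cases he
    exact hp
  · exact fun hp => ⟨_, hp, rfl⟩

lemma msoWinOn.mono {SM : L.Structure M} {SN : L.Structure N} {h H : List (MSOMove M × MSOMove N)}
    (hw : msoWinOn L SM SN H) (hsub : h ⊆ H) : msoWinOn L SM SN h := by
  obtain ⟨hkind, hpts, hrel, hsets⟩ := hw
  have hP : ptsOf h ⊆ ptsOf H := List.filterMap_subset _ hsub
  have hS : setsOf h ⊆ setsOf H := List.filterMap_subset _ hsub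
  exact ⟨fun p hp => hkind p (hsub hp), fun p hp q hq => hpts p (hP hp) q (hP hq),
    fun n R f hf => hrel n R f fun i => hP (hf i), fun p hp s hs => hsets p (hP hp) s (hS hs)⟩

lemma msoWinning.winOn_of_reachable {SM : L.Structure M} {SN : L.Structure N} {m : ℕ}
    {S : MSOStrat M N} (hw : msoWinning L SM SN m S) {h} (hr : Reachable S h) (hm : h.length ≤ m) :
    msoWinOn L SM SN h := by
  obtain ⟨σ, hσ⟩ := hr
  exact (hw σ).mono (hσ ▸ (msoPlay_prefix S σ hm).subset)

def AnswersInKind (S : MSOStrat M N) (h : List (MSOMove M × MSOMove N)) : Prop :=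
  (∀ a, ∃ b, S h (.inl (.inl a)) = (.inl a, .inl b)) ∧
  (∀ b, ∃ a, S h (.inr (.inl b)) = (.inl a, .inl b)) ∧
  (∀ X, ∃ Y, S h (.inl (.inr X)) = (.inr X, .inr Y)) ∧
  (∀ Y, ∃ X, S h (.inr (.inr Y)) = (.inr X, .inr Y))

lemma msoWinning.answersInKind {SM : L.Structure M} {SN : L.Structure N} {m : ℕ}
    {S : MSOStrat M N} (hp : msoProper S) (hw : msoWinning L SM SN m S) {h} (hr : Reachable S h)
    (hm : h.length < m) : AnswersInKind S h := by
  have kind z : (∃ a b, S h z = (.inl a, .inl b)) ∨ (∃ X Y, S h z = (.inr X, .inr Y)) :=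
    (hw.winOn_of_reachable (hr.append z) (by simpa using hm)).1 _ (by simp)
  refine ⟨fun a => ?_, fun b => ?_, fun X => ?_, fun Y => ?_⟩
  · have := (hp h (.inl (.inl a))).1 _ rfl
    rcases kind (.inl (.inl a)) with ⟨a', b, he⟩ | ⟨X, Y, he⟩ <;> rw [he] at this <;> cases this
    exact ⟨b, he⟩
  · have := (hp h (.inr (.inl b))).2 _ rfl
    rcases kind (.inr (.inl b)) with ⟨a, b', he⟩ | ⟨X, Y, he⟩ <;> rw [he] at this <;> cases this
    exact ⟨a, he⟩
  · have := (hp h (.inl (.inr X))).1 _ rfl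
    rcases kind (.inl (.inr X)) with ⟨a, b, he⟩ | ⟨X', Y, he⟩ <;> rw [he] at this <;> cases this
    exact ⟨Y, he⟩
  · have := (hp h (.inr (.inr Y))).2 _ rfl
    rcases kind (.inr (.inr Y)) with ⟨a, b, he⟩ | ⟨X, Y', he⟩ <;> rw [he] at this <;> cases this
    exact ⟨X, he⟩

end Game

section Adequacy

variable {L : FirstOrder.Language} {M N : Type} {S : MSOStrat M N}
  {h : List (MSOMove M × MSOMove N)}

lemma AnswersInKind.biTotal_points (hS : AnswersInKind S h) :
    BiTotal fun (x : M) (y : N) => ∃ z, S h z = (.inl x, .inl y) :=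
  ⟨fun a => (hS.1 a).imp fun _ hb => ⟨_, hb⟩, fun b => (hS.2.1 b).imp fun _ ha => ⟨_, ha⟩⟩

lemma AnswersInKind.biTotal_sets (hS : AnswersInKind S h) :
    BiTotal fun (X : Set M) (Y : Set N) => ∃ z, S h z = (.inr X, .inr Y) :=
  ⟨fun X => (hS.2.2.1 X).imp fun _ hY => ⟨_, hY⟩, fun Y => (hS.2.2.2 Y).imp fun _ hX => ⟨_, hX⟩⟩

theorem msoWinning.realize_iff {SM : L.Structure M} {SN : L.Structure N} {m : ℕ}
    (hp : msoProper S) (hw : msoWinning L SM SN m S) {n k : ℕ} (φ : MSOForm L n k)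
    (hr : Reachable S h) (hm : h.length + msoQR φ ≤ m) {v : Fin n → M × N}
    {s : Fin k → Set M × Set N} (hv : ∀ i, v i ∈ ptsOf h) (hs : ∀ i, s i ∈ setsOf h) :
    MSORealize SM φ (Prod.fst ∘ v) (Prod.fst ∘ s) ↔
      MSORealize SN φ (Prod.snd ∘ v) (Prod.snd ∘ s) := by
  induction φ generalizing h with
  | fal => exact Iff.rfl
  | eq i j =>
    exact (hw.winOn_of_reachable hr (by simpa [msoQR] using hm)).2.1 _ (hv i) _ (hv j)
  | rel R w =>
    exact (hw.winOn_of_reachable hr (by simpa [msoQR] using hm)).2.2.1 _ R (v ∘ w) fun i => hv (w i)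
  | mem i X =>
    exact (hw.winOn_of_reachable hr (by simpa [msoQR] using hm)).2.2.2 _ (hv i) _ (hs X)
  | imp f g ihf ihg =>
    simp only [msoQR] at hm
    exact imp_congr (ihf hr (by omega) hv hs) (ihg hr (by omega) hv hs)
  | allP f ih =>
    simp only [msoQR] at hm
    refine (hw.answersInKind hp hr (by omega)).biTotal_points.rel_forall ?_
    rintro x y ⟨z, hz⟩
    have hsub : h ⊆ h ++ [S h z] := List.subset_append_left _ _
    have hxy : (x, y) ∈ ptsOf (h ++ [S h z]) :=
      mem_ptsOf.mpr (hz ▸ List.mem_append_right _ (List.mem_singleton_self _))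
    have := ih (hr.append z) (by simp; omega) (v := Fin.snoc v (x, y))
      (forall_mem_snoc (fun i => List.filterMap_subset _ hsub (hv i)) hxy)
      (fun i => List.filterMap_subset _ hsub (hs i))
    simpa only [Fin.comp_snoc] using this
  | allS f ih =>
    simp only [msoQR] at hm
    refine (hw.answersInKind hp hr (by omega)).biTotal_sets.rel_forall ?_
    rintro X Y ⟨z, hz⟩
    have hsub : h ⊆ h ++ [S h z] := List.subset_append_left _ _
    have hXY : (X, Y) ∈ setsOf (h ++ [S h z]) :=
      mem_setsOf.mpr (hz ▸ List.mem_append_right _ (List.mem_singleton_self _))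
    have := ih (hr.append z) (by simp; omega) (s := Fin.snoc s (X, Y))
      (fun i => List.filterMap_subset _ hsub (hv i))
      (forall_mem_snoc (fun i => List.filterMap_subset _ hsub (hs i)) hXY)
    simpa only [Fin.comp_snoc] using this

end Adequacy

section Composition

variable {A₁ A₂ B₁ B₂ : Type}

def IsComponentwise (H : List (MSOMove (A₁ ⊕ B₁) × MSOMove (A₂ ⊕ B₂))) : Prop :=
  ∀ p ∈ H, (∃ a a', p = (.inl (.inl a), .inl (.inl a'))) ∨
    (∃ b b', p = (.inl (.inr b), .inl (.inr b'))) ∨ ∃ Z Z', p = (.inr Z, .inr Z')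

variable {H : List (MSOMove (A₁ ⊕ B₁) × MSOMove (A₂ ⊕ B₂))}

lemma IsComponentwise.liftRel (hH : IsComponentwise H) {x : A₁ ⊕ B₁} {y : A₂ ⊕ B₂}
    (hxy : (x, y) ∈ ptsOf H) :
    Sum.LiftRel (fun a a' => (a, a') ∈ ptsOf (msoProjA H))
      (fun b b' => (b, b') ∈ ptsOf (msoProjB H)) x y := by
  have hmem := mem_ptsOf.mp hxy
  rcases hH _ hmem with ⟨a, a', he⟩ | ⟨b, b', he⟩ | ⟨Z, Z', he⟩ <;> cases he
  · exact .inl (mem_ptsOf.mpr (List.mem_filterMap.mpr ⟨_, hmem, rfl⟩))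
  · exact .inr (mem_ptsOf.mpr (List.mem_filterMap.mpr ⟨_, hmem, rfl⟩))

lemma preimage_inl_mem_setsOf_msoProjA {Z : Set (A₁ ⊕ B₁)} {Z' : Set (A₂ ⊕ B₂)}
    (h : (Z, Z') ∈ setsOf H) : (Sum.inl ⁻¹' Z, Sum.inl ⁻¹' Z') ∈ setsOf (msoProjA H) :=
  mem_setsOf.mpr (List.mem_filterMap.mpr ⟨_, mem_setsOf.mp h, rfl⟩)

lemma preimage_inr_mem_setsOf_msoProjB {Z : Set (A₁ ⊕ B₁)} {Z' : Set (A₂ ⊕ B₂)}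
    (h : (Z, Z') ∈ setsOf H) : (Sum.inr ⁻¹' Z, Sum.inr ⁻¹' Z') ∈ setsOf (msoProjB H) :=
  mem_setsOf.mpr (List.mem_filterMap.mpr ⟨_, mem_setsOf.mp h, rfl⟩)

lemma msoWinOn_sumStructure {L : FirstOrder.Language} (hfun : ∀ n, IsEmpty (L.Functions n))
    {SA₁ : L.Structure A₁} {SA₂ : L.Structure A₂} {SB₁ : L.Structure B₁}
    {SB₂ : L.Structure B₂} (hH : IsComponentwise H) (hA : msoWinOn L SA₁ SA₂ (msoProjA H))
    (hB : msoWinOn L SB₁ SB₂ (msoProjB H)) :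
    msoWinOn L (sumStructure L hfun SA₁ SB₁) (sumStructure L hfun SA₂ SB₂) H := by
  refine ⟨fun p hp => ?_, fun p hp q hq => ?_, fun n R f hf => ?_, ?_⟩
  · rcases hH p hp with ⟨a, a', rfl⟩ | ⟨b, b', rfl⟩ | ⟨Z, Z', rfl⟩
    exacts [.inl ⟨_, _, rfl⟩, .inl ⟨_, _, rfl⟩, .inr ⟨_, _, rfl⟩]
  · exact (hH.liftRel hp).eq_iff_eq (fun _ _ ha _ _ hc => hA.2.1 _ ha _ hc)
      (fun _ _ hb _ _ hd => hB.2.1 _ hb _ hd) (hH.liftRel hq)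
  · exact sumStructure_relMap_iff_of_liftRel hfun
      (fun R f g hfg => hA.2.2.1 _ R (fun i => (f i, g i)) hfg)
      (fun R f g hfg => hB.2.2.1 _ R (fun i => (f i, g i)) hfg) R fun i => hH.liftRel (hf i)
  · rintro ⟨x, y⟩ hp ⟨Z, Z'⟩ hs
    cases hH.liftRel hp with
    | inl ha => exact hA.2.2.2 _ ha _ (preimage_inl_mem_setsOf_msoProjA hs)
    | inr hb => exact hB.2.2.2 _ hb _ (preimage_inr_mem_setsOf_msoProjB hs)

lemma msoComp_proper (S₁ : MSOStrat A₁ A₂) (S₂ : MSOStrat B₁ B₂) :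
    msoProper (msoComp S₁ S₂) := by
  refine fun h x => ⟨?_, ?_⟩ <;> rintro ((a | b) | Z) rfl <;> rfl

variable {S₁ : MSOStrat A₁ A₂} {S₂ : MSOStrat B₁ B₂}

lemma msoComp_cases (hA : AnswersInKind S₁ (msoProjA H)) (hB : AnswersInKind S₂ (msoProjB H))
    (z : MSOMove (A₁ ⊕ B₁) ⊕ MSOMove (A₂ ⊕ B₂)) :
    (∃ zA a a', S₁ (msoProjA H) zA = (.inl a, .inl a') ∧
      msoComp S₁ S₂ H z = (.inl (.inl a), .inl (.inl a'))) ∨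
    (∃ zB b b', S₂ (msoProjB H) zB = (.inl b, .inl b') ∧
      msoComp S₁ S₂ H z = (.inl (.inr b), .inl (.inr b'))) ∨
    (∃ zA zB Z Z', S₁ (msoProjA H) zA = (.inr (Sum.inl ⁻¹' Z), .inr (Sum.inl ⁻¹' Z')) ∧
      S₂ (msoProjB H) zB = (.inr (Sum.inr ⁻¹' Z), .inr (Sum.inr ⁻¹' Z')) ∧
      msoComp S₁ S₂ H z = (.inr Z, .inr Z')) := by
  rcases z with ((a | b) | Z) | ((a' | b') | Z')
  · obtain ⟨a', ha⟩ := hA.1 a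
    exact .inl ⟨_, a, a', ha, by simp only [msoComp, ha, mapMove]⟩
  · obtain ⟨b', hb⟩ := hB.1 b
    exact .inr (.inl ⟨_, b, b', hb, by simp only [msoComp, hb, mapMove]⟩)
  · obtain ⟨ZA', hA'⟩ := hA.2.2.1 (Sum.inl ⁻¹' Z)
    obtain ⟨ZB', hB'⟩ := hB.2.2.1 (Sum.inr ⁻¹' Z)
    refine .inr (.inr ⟨.inl (.inr (Sum.inl ⁻¹' Z)), .inl (.inr (Sum.inr ⁻¹' Z)), Z,
      Sum.inl '' ZA' ∪ Sum.inr '' ZB', ?_, ?_, ?_⟩)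
    · simpa [Set.preimage_image_eq _ Sum.inl_injective] using hA'
    · simpa [Set.preimage_image_eq _ Sum.inr_injective] using hB'
    · simp only [msoComp, hA', hB', moveSet]
  · obtain ⟨a, ha⟩ := hA.2.1 a'
    exact .inl ⟨_, a, a', ha, by simp only [msoComp, ha, mapMove]⟩
  · obtain ⟨b, hb⟩ := hB.2.1 b'
    exact .inr (.inl ⟨_, b, b', hb, by simp only [msoComp, hb, mapMove]⟩)
  · obtain ⟨ZA, hA'⟩ := hA.2.2.2 (Sum.inl ⁻¹' Z')
    obtain ⟨ZB, hB'⟩ := hB.2.2.2 (Sum.inr ⁻¹' Z')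
    refine .inr (.inr ⟨.inr (.inr (Sum.inl ⁻¹' Z')), .inr (.inr (Sum.inr ⁻¹' Z')),
      Sum.inl '' ZA ∪ Sum.inr '' ZB, Z', ?_, ?_, ?_⟩)
    · simpa [Set.preimage_image_eq _ Sum.inl_injective] using hA'
    · simpa [Set.preimage_image_eq _ Sum.inr_injective] using hB'
    · simp only [msoComp, hA', hB', moveSet]

lemma msoProjA_append (H l : List (MSOMove (A₁ ⊕ B₁) × MSOMove (A₂ ⊕ B₂))) :
    msoProjA (H ++ l) = msoProjA H ++ msoProjA l :=
  List.filterMap_append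

lemma msoProjB_append (H l : List (MSOMove (A₁ ⊕ B₁) × MSOMove (A₂ ⊕ B₂))) :
    msoProjB (H ++ l) = msoProjB H ++ msoProjB l :=
  List.filterMap_append

lemma length_msoProjA_le (H : List (MSOMove (A₁ ⊕ B₁) × MSOMove (A₂ ⊕ B₂))) :
    (msoProjA H).length ≤ H.length :=
  List.length_filterMap_le _ _

lemma length_msoProjB_le (H : List (MSOMove (A₁ ⊕ B₁) × MSOMove (A₂ ⊕ B₂))) :
    (msoProjB H).length ≤ H.length :=
  List.length_filterMap_le _ _

lemma msoComp_step (hH : IsComponentwise H) (hRA : Reachable S₁ (msoProjA H))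
    (hRB : Reachable S₂ (msoProjB H)) (hA : AnswersInKind S₁ (msoProjA H))
    (hB : AnswersInKind S₂ (msoProjB H)) (z : MSOMove (A₁ ⊕ B₁) ⊕ MSOMove (A₂ ⊕ B₂)) :
    IsComponentwise (H ++ [msoComp S₁ S₂ H z]) ∧
      Reachable S₁ (msoProjA (H ++ [msoComp S₁ S₂ H z])) ∧
      Reachable S₂ (msoProjB (H ++ [msoComp S₁ S₂ H z])) := by
  have hH' (q) (hq : IsComponentwise [q]) : IsComponentwise (H ++ [q]) :=
    List.forall_mem_append.mpr ⟨hH, hq⟩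
  rcases msoComp_cases hA hB z with ⟨zA, a, a', hzA, hq⟩ | ⟨zB, b, b', hzB, hq⟩ |
    ⟨zA, zB, Z, Z', hzA, hzB, hq⟩ <;> rw [hq, msoProjA_append, msoProjB_append]
  · refine ⟨hH' _ (List.forall_mem_singleton.mpr (.inl ⟨a, a', rfl⟩)), ?_, ?_⟩
    · show Reachable S₁ (msoProjA H ++ [(.inl a, .inl a')])
      exact hzA ▸ hRA.append zA
    · show Reachable S₂ (msoProjB H ++ [])
      rwa [List.append_nil]
  · refine ⟨hH' _ (List.forall_mem_singleton.mpr (.inr (.inl ⟨b, b', rfl⟩))), ?_, ?_⟩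
    · show Reachable S₁ (msoProjA H ++ [])
      rwa [List.append_nil]
    · show Reachable S₂ (msoProjB H ++ [(.inl b, .inl b')])
      exact hzB ▸ hRB.append zB
  · refine ⟨hH' _ (List.forall_mem_singleton.mpr (.inr (.inr ⟨Z, Z', rfl⟩))), ?_, ?_⟩
    · show Reachable S₁ (msoProjA H ++ [(.inr (Sum.inl ⁻¹' Z), .inr (Sum.inl ⁻¹' Z'))])
      exact hzA ▸ hRA.append zA
    · show Reachable S₂ (msoProjB H ++ [(.inr (Sum.inr ⁻¹' Z), .inr (Sum.inr ⁻¹' Z'))])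
      exact hzB ▸ hRB.append zB

lemma msoComp_play_invariant {L : FirstOrder.Language} {SA₁ : L.Structure A₁}
    {SA₂ : L.Structure A₂} {SB₁ : L.Structure B₁} {SB₂ : L.Structure B₂} {m : ℕ}
    (hS₁p : msoProper S₁) (hS₂p : msoProper S₂)
    (hS₁ : msoWinning L SA₁ SA₂ m S₁) (hS₂ : msoWinning L SB₁ SB₂ m S₂) (σ) {k : ℕ}
    (hk : k ≤ m) :
    IsComponentwise (msoPlay (msoComp S₁ S₂) σ k) ∧
      Reachable S₁ (msoProjA (msoPlay (msoComp S₁ S₂) σ k)) ∧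
      Reachable S₂ (msoProjB (msoPlay (msoComp S₁ S₂) σ k)) := by
  induction k with
  | zero => exact ⟨by simp [msoPlay, IsComponentwise], .nil S₁, .nil S₂⟩
  | succ k ih =>
    obtain ⟨hH, hRA, hRB⟩ := ih (by omega)
    have hlen := msoPlay_length (msoComp S₁ S₂) σ k
    have hlenA := length_msoProjA_le (msoPlay (msoComp S₁ S₂) σ k)
    have hlenB := length_msoProjB_le (msoPlay (msoComp S₁ S₂) σ k)
    exact msoComp_step hH hRA hRB (hS₁.answersInKind hS₁p hRA (by omega))
      (hS₂.answersInKind hS₂p hRB (by omega)) _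

lemma msoComp_winning {L : FirstOrder.Language} (hfun : ∀ n, IsEmpty (L.Functions n))
    {SA₁ : L.Structure A₁} {SA₂ : L.Structure A₂} {SB₁ : L.Structure B₁}
    {SB₂ : L.Structure B₂} {m : ℕ} (hS₁p : msoProper S₁) (hS₂p : msoProper S₂)
    (hS₁ : msoWinning L SA₁ SA₂ m S₁) (hS₂ : msoWinning L SB₁ SB₂ m S₂) :
    msoWinning L (sumStructure L hfun SA₁ SB₁) (sumStructure L hfun SA₂ SB₂) m
      (msoComp S₁ S₂) := fun σ => by
  obtain ⟨hH, hRA, hRB⟩ := msoComp_play_invariant hS₁p hS₂p hS₁ hS₂ σ le_rfl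
  have hlen := msoPlay_length (msoComp S₁ S₂) σ m
  exact msoWinOn_sumStructure hfun hH
    (hS₁.winOn_of_reachable hRA ((length_msoProjA_le _).trans_eq hlen))
    (hS₂.winOn_of_reachable hRB ((length_msoProjB_le _).trans_eq hlen))

end Composition

theorem msoComp_winning_and_same_MSO_sentences_general (L : FirstOrder.Language)
    (hfun : ∀ n, IsEmpty (L.Functions n)) (m : ℕ)
    (A₁ A₂ B₁ B₂ : Type)
    (SA₁ : L.Structure A₁) (SA₂ : L.Structure A₂)
    (SB₁ : L.Structure B₁) (SB₂ : L.Structure B₂)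
    (S₁ : MSOStrat A₁ A₂) (S₂ : MSOStrat B₁ B₂)
    (hS₁p : msoProper S₁) (hS₂p : msoProper S₂)
    (hS₁ : msoWinning L SA₁ SA₂ m S₁) (hS₂ : msoWinning L SB₁ SB₂ m S₂) :
    msoWinning L (sumStructure L hfun SA₁ SB₁) (sumStructure L hfun SA₂ SB₂)
      m (msoComp S₁ S₂) ∧
    (∀ φ : MSOForm L 0 0, msoQR φ ≤ m →
      (MSORealize (sumStructure L hfun SA₁ SB₁) φ
          (fun i => i.elim0) (fun i => i.elim0) ↔
        MSORealize (sumStructure L hfun SA₂ SB₂) φ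
          (fun i => i.elim0) (fun i => i.elim0))) := by
  have hwin := msoComp_winning hfun hS₁p hS₂p hS₁ hS₂
  refine ⟨hwin, fun φ hφ => ?_⟩
  have := hwin.realize_iff (msoComp_proper S₁ S₂) φ (.nil _) (by simpa using hφ)
    (v := Fin.elim0) (s := Fin.elim0) (fun i => i.elim0) (fun i => i.elim0)
  convert this using 2

/-- Composition of winning MSO-EF strategies on disjoint unions: if the
duplicator has winning strategies in the `m`-round MSO-EF games between
`A₁, A₂` and between `B₁, B₂`, then the composed (componentwise) strategy is
winning in the `m`-round MSO-EF game between `A₁ ⊔ B₁` and `A₂ ⊔ B₂`; in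
particular the disjoint unions satisfy the same MSO sentences of quantifier
rank at most `m`. -/
theorem msoComp_winning_and_same_MSO_sentences (L : FirstOrder.Language)
    (hfun : ∀ n, IsEmpty (L.Functions n))
    (harity : ∀ n, 2 < n → IsEmpty (L.Relations n))
    (hfin : ∀ n, Finite (L.Relations n)) (m : ℕ)
    (A₁ A₂ B₁ B₂ : Type) [Fintype A₁] [Fintype A₂] [Fintype B₁] [Fintype B₂]
    (SA₁ : L.Structure A₁) (SA₂ : L.Structure A₂)
    (SB₁ : L.Structure B₁) (SB₂ : L.Structure B₂)
    (S₁ : MSOStrat A₁ A₂) (S₂ : MSOStrat B₁ B₂)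
    (hS₁p : msoProper S₁) (hS₂p : msoProper S₂)
    (hS₁ : msoWinning L SA₁ SA₂ m S₁) (hS₂ : msoWinning L SB₁ SB₂ m S₂) :
    msoWinning L (sumStructure L hfun SA₁ SB₁) (sumStructure L hfun SA₂ SB₂)
      m (msoComp S₁ S₂) ∧
    (∀ φ : MSOForm L 0 0, msoQR φ ≤ m →
      (MSORealize (sumStructure L hfun SA₁ SB₁) φ
          (fun i => i.elim0) (fun i => i.elim0) ↔
        MSORealize (sumStructure L hfun SA₂ SB₂) φ
          (fun i => i.elim0) (fun i => i.elim0))) :=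
  msoComp_winning_and_same_MSO_sentences_general L hfun m A₁ A₂ B₁ B₂ SA₁ SA₂ SB₁ SB₂ S₁ S₂ hS₁p
    hS₂p hS₁ hS₂
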